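/- Classical upper bound corollary: Fix a k-uniform hypergraph G. For any assignment of classical k-SAT clauses to the edges of G (i.e. each clause forbids one computational-basis state of its k variables), the number of satisfying Boolean assignments equals the kernel dimension of the corresponding diagonal QSAT Hamiltonian, and hence is an upper bound (with probability 1 over Haar-random projectors) on dim ker(H_φ) for random rank-1 k-QSAT on the same hypergraph G. -/
import Mathlib


/-- The matrix of the rank-1 projector `|φ⟩⟨φ|` on the qubits `S 0, ..., S (k-1)`,
tensored with the identity elsewhere. -/
noncomputable def clauseMatrix (N k : ℕ) (S : Fin k → Fin N) (φ : (Fin k → Fin 2) → ℂ) :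
    Matrix (Fin N → Fin 2) (Fin N → Fin 2) ℂ := fun g g' =>
  if ∀ i : Fin N, (∀ j : Fin k, S j ≠ i) → g i = g' i
    then φ (g ∘ S) * starRingEnd ℂ (φ (g' ∘ S)) else 0

/-- Real coordinates of the clause vectors. -/
noncomputable def realCoords (k M : ℕ) (φ : Fin M → (Fin k → Fin 2) → ℂ) :
    Fin M × (Fin k → Fin 2) × Bool → ℝ := fun x =>
  if x.2.2 then (φ x.1 x.2.1).re else (φ x.1 x.2.1).im

open MvPolynomial Matrix Finset

lemma eq_of_agree {N k : ℕ} (S : Fin k → Fin N) {g g' : Fin N → Fin 2} {b' : Fin k → Fin 2}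
    (h : ∀ i, (∀ j, S j ≠ i) → g i = g' i) (h1 : g ∘ S = b') (h2 : g' ∘ S = b') : g = g' := by
  funext i
  by_cases hi : ∀ j, S j ≠ i
  · exact h i hi
  · push_neg at hi
    obtain ⟨j, hj⟩ := hi
    subst hj
    calc g (S j) = b' j := congrFun h1 j
    _ = g' (S j) := (congrFun h2 j).symm

noncomputable def diagW (N k M : ℕ) (E : Fin M → Fin k → Fin N) (b : Fin M → Fin k → Fin 2) :
    (Fin N → Fin 2) → ℂ := fun g => ((Finset.univ.filter fun m => g ∘ E m = b m).card : ℂ)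

lemma sum_clause_indicator_eq_diagonal (N k M : ℕ) (E : Fin M → Fin k → Fin N)
    (b : Fin M → Fin k → Fin 2) :
    (∑ m, clauseMatrix N k (E m) (fun f => if f = b m then 1 else 0)) =
      Matrix.diagonal (diagW N k M E b) := by
  ext g g'
  rw [Matrix.sum_apply]
  by_cases hgg : g = g'
  · subst hgg
    rw [Matrix.diagonal_apply_eq]
    rw [diagW, ← Finset.sum_boole]
    refine Finset.sum_congr rfl fun m _ => ?_
    rw [clauseMatrix, if_pos (fun i _ => rfl)]
    by_cases h : g ∘ E m = b m <;> simp [h]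
  · rw [Matrix.diagonal_apply_ne _ hgg]
    refine Finset.sum_eq_zero fun m _ => ?_
    rw [clauseMatrix]
    split_ifs with h h1 h2
    · exact absurd (eq_of_agree (E m) h h1 h2) hgg
    all_goals simp

noncomputable def rePoly {V : Type*} (q : MvPolynomial V ℂ) : MvPolynomial V ℝ :=
  ∑ s ∈ q.support, monomial s (q.coeff s).re

noncomputable def imPoly {V : Type*} (q : MvPolynomial V ℂ) : MvPolynomial V ℝ :=
  ∑ s ∈ q.support, monomial s (q.coeff s).im

lemma eval_reim {V : Type*} (q : MvPolynomial V ℂ) (x : V → ℝ) :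
    eval (fun v => (x v : ℂ)) q =
      (eval x (rePoly q) : ℂ) + Complex.I * (eval x (imPoly q) : ℂ) := by
  conv_lhs => rw [q.as_sum]
  rw [rePoly, imPoly, map_sum, map_sum, map_sum]
  push_cast
  rw [Finset.mul_sum, ← Finset.sum_add_distrib]
  refine Finset.sum_congr rfl fun s _ => ?_
  rw [eval_monomial, eval_monomial, eval_monomial]
  have hprod : (Finsupp.prod s fun n e => ((x n : ℂ)) ^ e) =
      ((Finsupp.prod s fun n e => (x n) ^ e : ℝ) : ℂ) := by
    rw [Finsupp.prod, Finsupp.prod]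
    push_cast
    rfl
  rw [hprod]
  push_cast
  linear_combination ((s.prod fun n e => x n ^ e : ℝ) : ℂ) * (Complex.re_add_im (q.coeff s)).symm

lemma eval_sq_ne_zero_iff {V : Type*} (q : MvPolynomial V ℂ) (x : V → ℝ) :
    eval x (rePoly q ^ 2 + imPoly q ^ 2) ≠ 0 ↔ eval (fun v => (x v : ℂ)) q ≠ 0 := by
  rw [eval_reim q x]
  rw [map_add, map_pow, map_pow]
  constructor
  · intro h hz
    apply h
    have hre : eval x (rePoly q) = 0 ∧ eval x (imPoly q) = 0 := by
      have h1 := congrArg Complex.re hz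
      have h2 := congrArg Complex.im hz
      simp at h1 h2
      exact ⟨h1, h2⟩
    rw [hre.1, hre.2]; ring
  · intro h hz
    apply h
    have h1 : eval x (rePoly q) = 0 ∧ eval x (imPoly q) = 0 := by
      constructor <;> nlinarith [sq_nonneg (eval x (rePoly q)), sq_nonneg (eval x (imPoly q))]
    rw [h1.1, h1.2]
    simp

noncomputable def HPoly (N k M : ℕ) (E : Fin M → Fin k → Fin N) :
    Matrix (Fin N → Fin 2) (Fin N → Fin 2)
      (MvPolynomial (Fin M × (Fin k → Fin 2) × Bool) ℂ) :=
  ∑ m, Matrix.of fun g g' =>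
    if ∀ i : Fin N, (∀ j : Fin k, E m j ≠ i) → g i = g' i
      then (X (m, g ∘ E m, true) + C Complex.I * X (m, g ∘ E m, false)) *
        (X (m, g' ∘ E m, true) - C Complex.I * X (m, g' ∘ E m, false))
      else 0

lemma HPoly_map (N k M : ℕ) (E : Fin M → Fin k → Fin N) (φ : Fin M → (Fin k → Fin 2) → ℂ) :
    (HPoly N k M E).map (eval fun v => ((realCoords k M φ v : ℝ) : ℂ)) =
      ∑ m, clauseMatrix N k (E m) (φ m) := by
  ext g g'
  rw [Matrix.map_apply, Matrix.sum_apply, HPoly, Matrix.sum_apply, map_sum]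
  refine Finset.sum_congr rfl fun m _ => ?_
  rw [Matrix.of_apply, clauseMatrix]
  rw [apply_ite (eval fun v => ((realCoords k M φ v : ℝ) : ℂ))]
  congr 1
  · simp only [_root_.map_mul, map_add, map_sub, eval_X, eval_C]
    have h1 : ∀ f : Fin k → Fin 2,
        ((realCoords k M φ (m, f, true) : ℝ) : ℂ) + Complex.I * ((realCoords k M φ (m, f, false) : ℝ) : ℂ)
          = φ m f := by
      intro f
      simp only [realCoords, if_pos, if_neg, Bool.ite_eq_true_distrib, if_true, if_false]
      rw [mul_comm]
      exact Complex.re_add_im _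
    have h2 : ∀ f : Fin k → Fin 2,
        ((realCoords k M φ (m, f, true) : ℝ) : ℂ) - Complex.I * ((realCoords k M φ (m, f, false) : ℝ) : ℂ)
          = starRingEnd ℂ (φ m f) := by
      intro f
      simp only [realCoords]
      apply Complex.ext <;> simp
    rw [h1, h2]

lemma rank_submatrix_le_gen {m' : Type*} [Fintype m'] [DecidableEq m'] {r : ℕ}
    (A : Matrix m' m' ℂ) (f g : Fin r → m') :
    (A.submatrix f g).rank ≤ A.rank := by
  have hA : A.submatrix f g =
      (Matrix.of fun (i : Fin r) (j : m') => if f i = j then (1 : ℂ) else 0) * A *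
      (Matrix.of fun (i : m') (j : Fin r) => if i = g j then (1 : ℂ) else 0) := by
    ext i j
    simp [Matrix.mul_apply, Finset.sum_ite_eq, Finset.sum_ite_eq']
  rw [hA]
  exact le_trans (Matrix.rank_mul_le_left _ _) (Matrix.rank_mul_le_right _ _)

lemma finrank_ker_toLin' {m' : Type*} [Fintype m'] [DecidableEq m'] (A : Matrix m' m' ℂ) :
    Module.finrank ℂ (LinearMap.ker (Matrix.toLin' A)) = Fintype.card m' - A.rank := by
  have h := LinearMap.finrank_range_add_finrank_ker (Matrix.mulVecLin A)
  rw [Module.finrank_fintype_fun_eq_card] at h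
  rw [Matrix.toLin'_apply', Matrix.rank]
  omega

/-- Classical upper bound: for any assignment of classical k-SAT clauses (forbidding the
bitstring `b m` on edge `E m`), the number of satisfying Boolean assignments equals the
kernel dimension of the corresponding diagonal QSAT Hamiltonian, and this number bounds
the kernel dimension of the random rank-1 k-QSAT Hamiltonian on the same hypergraph for
all clause vectors `φ` away from the zero set of a nonzero polynomial (i.e. with
probability 1). -/
theorem stmt14 (N k M : ℕ) (E : Fin M → Fin k → Fin N)
    (hE : ∀ m, Function.Injective (E m)) (b : Fin M → Fin k → Fin 2) :
    (Fintype.card {σ : Fin N → Fin 2 // ∀ m, σ ∘ E m ≠ b m} =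
      Module.finrank ℂ (LinearMap.ker (Matrix.toLin'
        (∑ m, clauseMatrix N k (E m) (fun f => if f = b m then 1 else 0))))) ∧
    ∃ p : MvPolynomial (Fin M × (Fin k → Fin 2) × Bool) ℝ, p ≠ 0 ∧
      ∀ φ : Fin M → (Fin k → Fin 2) → ℂ,
        MvPolynomial.eval (realCoords k M φ) p ≠ 0 →
        Module.finrank ℂ (LinearMap.ker (Matrix.toLin'
            (∑ m, clauseMatrix N k (E m) (φ m)))) ≤
          Fintype.card {σ : Fin N → Fin 2 // ∀ m, σ ∘ E m ≠ b m} := by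
  classical
  set w := diagW N k M E b with hw
  have hdiag := sum_clause_indicator_eq_diagonal N k M E b
  have hw0 : ∀ g, w g = 0 ↔ ∀ m, g ∘ E m ≠ b m := by
    intro g
    rw [hw, diagW]
    rw [Nat.cast_eq_zero, Finset.card_eq_zero, Finset.filter_eq_empty_iff]
    simp
  have hcard_eq : Fintype.card {σ : Fin N → Fin 2 // ∀ m, σ ∘ E m ≠ b m}
      = Fintype.card {g // w g = 0} := by
    apply Fintype.card_congr
    exact Equiv.subtypeEquivRight fun g => (hw0 g).symm
  have hrankdiag : (Matrix.diagonal w).rank = Fintype.card {g // w g ≠ 0} :=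
    Matrix.rank_diagonal w
  have htot : Fintype.card {g // w g = 0} + Fintype.card {g // w g ≠ 0}
      = Fintype.card (Fin N → Fin 2) := by
    have h1 : Fintype.card {g : Fin N → Fin 2 // w g ≠ 0} =
        Fintype.card (Fin N → Fin 2) - Fintype.card {g : Fin N → Fin 2 // w g = 0} :=
      Fintype.card_subtype_compl _
    have h2 := Fintype.card_subtype_le (fun g : Fin N → Fin 2 => w g = 0)
    omega
  have part1 : Fintype.card {σ : Fin N → Fin 2 // ∀ m, σ ∘ E m ≠ b m} =
      Module.finrank ℂ (LinearMap.ker (Matrix.toLin'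
        (∑ m, clauseMatrix N k (E m) (fun f => if f = b m then 1 else 0)))) := by
    rw [hdiag, finrank_ker_toLin', hrankdiag, hcard_eq]
    omega
  refine ⟨part1, ?_⟩
  -- part 2
  set r := Fintype.card {g // w g ≠ 0} with hr
  set e : Fin r ≃ {g // w g ≠ 0} := (Fintype.equivFin {g // w g ≠ 0}).symm with he
  set f : Fin r → (Fin N → Fin 2) := fun i => (e i : Fin N → Fin 2) with hf
  have hfinj : Function.Injective f := by
    intro i j hij
    exact e.injective (Subtype.ext hij)
  set q := ((HPoly N k M E).submatrix f f).det with hq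
  have hevalq : ∀ φ : Fin M → (Fin k → Fin 2) → ℂ,
      eval (fun v => ((realCoords k M φ v : ℝ) : ℂ)) q =
        ((∑ m, clauseMatrix N k (E m) (φ m)).submatrix f f).det := by
    intro φ
    rw [hq, RingHom.map_det]
    congr 1
    rw [RingHom.mapMatrix_apply, ← Matrix.submatrix_map, HPoly_map]
  refine ⟨rePoly q ^ 2 + imPoly q ^ 2, ?_, ?_⟩
  · -- nonzero at the diagonal point
    intro hp0
    set φ₀ : Fin M → (Fin k → Fin 2) → ℂ := fun m f => if f = b m then 1 else 0 with hφ₀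
    have h0 : eval (fun v => ((realCoords k M φ₀ v : ℝ) : ℂ)) q ≠ 0 := by
      rw [hevalq φ₀, hdiag, Matrix.submatrix_diagonal w f hfinj, Matrix.det_diagonal]
      exact Finset.prod_ne_zero_iff.mpr fun i _ => (e i).2
    have := (eval_sq_ne_zero_iff q (realCoords k M φ₀)).mpr h0
    rw [hp0] at this
    simp at this
  · intro φ hp
    have h0 : ((∑ m, clauseMatrix N k (E m) (φ m)).submatrix f f).det ≠ 0 := by
      rw [← hevalq φ]
      exact (eval_sq_ne_zero_iff q (realCoords k M φ)).mp hp
    have hrank_sub : ((∑ m, clauseMatrix N k (E m) (φ m)).submatrix f f).rank = r := by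
      rw [Matrix.rank_of_isUnit _ (Matrix.isUnit_iff_isUnit_det _ |>.mpr (isUnit_iff_ne_zero.mpr h0))]
      exact Fintype.card_fin r
    have hle : r ≤ (∑ m, clauseMatrix N k (E m) (φ m)).rank := by
      rw [← hrank_sub]
      exact rank_submatrix_le_gen _ f f
    have hrk := (∑ m, clauseMatrix N k (E m) (φ m)).rank_le_card_width
    rw [finrank_ker_toLin', hcard_eq]
    omega
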